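/- arXiv:1506.03980 — 2 statements merged into one kernel-verified Lean document; each statement's English description precedes it below -/
import Mathlib

section
/- For y ∉ closure(𝒪) where 𝒪 ⊂ ℝ³ is a nonempty open set, and τ > 0, one has ∫_𝒪 |∇_x p_{τ,y}(x)|² dx ≤ C τ (1 + 1/(τ d(y,𝒪))) e^{-2τ d(y,𝒪)} for some absolute constant C > 0, where p_{τ,y}(x) = e^{-τ|x-y|}/(4π|x-y|). -/
/-!
Every point of `𝒪` lies at distance at least `d = d(y, 𝒪) > 0` from `y`, so in polar coordinates
around `y` the integral is at most `3 |B(0,1)| ∫_d^∞ r² |∇p|² dr`. Since `(τr + 1)² ≤ 2τ²r² + 2`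
and `e^{-2τr} ≤ e^{-2τd}` for `r ≥ d`, the radial integrand is dominated by
`(τ² e^{-2τr} + e^{-2τd} r⁻²) / (8π²)`, whose integral over `(d, ∞)` is
`(τ/2 + 1/d) e^{-2τd} / (8π²)`.
-/

open MeasureTheory Real Metric Set

section PolarCoordinates

variable {E : Type*} [NormedAddCommGroup E] [NormedSpace ℝ E] [FiniteDimensional ℝ E]
  [MeasurableSpace E] [BorelSpace E] [Nontrivial E] (μ : Measure E) [μ.IsAddHaarMeasure]

theorem setIntegral_fun_norm_sub_le {f : ℝ → ℝ} {s : Set E} {y : E} {d : ℝ}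
    (hs : MeasurableSet s) (hd : 0 < d) (hsd : ∀ x ∈ s, d ≤ ‖x - y‖)
    (hf : ∀ r ∈ Ici d, 0 ≤ f r)
    (hint : IntegrableOn (fun r ↦ r ^ (Module.finrank ℝ E - 1) * f r) (Ioi d)) :
    ∫ x in s, f ‖x - y‖ ∂μ ≤ Module.finrank ℝ E * μ.real (ball 0 1) *
      ∫ r in Ioi d, r ^ (Module.finrank ℝ E - 1) * f r := by
  set g := (Ici d).indicator f
  have hg_nonneg : ∀ r, 0 ≤ g r := fun r ↦ indicator_nonneg hf r
  have hg_radial : (fun r ↦ r ^ (Module.finrank ℝ E - 1) • g r) =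
      (Ici d).indicator (fun r ↦ r ^ (Module.finrank ℝ E - 1) * f r) := by
    funext r
    simp only [g, smul_eq_mul, indicator_mul_right]
  have hIoi : Ioi 0 ∩ Ici d = Ici d := inter_eq_self_of_subset_right fun r hr ↦ hd.trans_le hr
  have hg_int : Integrable (fun x ↦ g ‖x‖) μ := by
    rw [integrable_fun_norm_addHaar, hg_radial]
    exact ((integrable_indicator_iff measurableSet_Ici).2
      ((integrableOn_Ici_iff_integrableOn_Ioi).2 hint)).integrableOn
  calc ∫ x in s, f ‖x - y‖ ∂μ = ∫ x in s, g ‖x - y‖ ∂μ :=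
        setIntegral_congr_fun hs fun x hx ↦ (indicator_of_mem (hsd x hx) f).symm
    _ ≤ ∫ x, g ‖x - y‖ ∂μ :=
        setIntegral_le_integral (hg_int.comp_sub_right y) (.of_forall fun x ↦ hg_nonneg _)
    _ = ∫ x, g ‖x‖ ∂μ := integral_sub_right_eq_self (fun x ↦ g ‖x‖) y
    _ = _ := by
      rw [integral_fun_norm_addHaar, hg_radial, setIntegral_indicator measurableSet_Ici, hIoi,
        integral_Ici_eq_integral_Ioi, nsmul_eq_mul, smul_eq_mul, mul_assoc]

end PolarCoordinates

/-- `|∇ₓ p_{τ,y}(x)|²` as a function of `r = |x - y|`. -/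
noncomputable def yukawaGradSq (τ r : ℝ) : ℝ := ((τ * r + 1) / (4 * π * r ^ 2) * exp (-τ * r)) ^ 2

noncomputable def radialMajorant (τ d r : ℝ) : ℝ :=
  τ ^ 2 * exp (-2 * τ * r) + exp (-2 * τ * d) * r ^ (-2 : ℝ)

section Radial

variable {τ d : ℝ}

theorem integrableOn_radialMajorant (hτ : 0 < τ) (hd : 0 < d) :
    IntegrableOn (radialMajorant τ d) (Ioi d) :=
  ((integrableOn_exp_mul_Ioi (by linarith) d).const_mul _).add
    ((integrableOn_Ioi_rpow_of_lt (by norm_num) hd).const_mul _)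

theorem integral_radialMajorant (hτ : 0 < τ) (hd : 0 < d) :
    ∫ r in Ioi d, radialMajorant τ d r = (τ / 2 + 1 / d) * exp (-2 * τ * d) := by
  unfold radialMajorant
  rw [integral_add ((integrableOn_exp_mul_Ioi (by linarith) d).const_mul _)
      ((integrableOn_Ioi_rpow_of_lt (by norm_num) hd).const_mul _),
    integral_const_mul, integral_const_mul, integral_exp_mul_Ioi (by linarith),
    integral_Ioi_rpow_of_lt (by norm_num) hd]
  norm_num [rpow_neg_one]
  field_simp

theorem sq_mul_yukawaGradSq_le (hτ : 0 ≤ τ) (hd : 0 < d) {r : ℝ} (hr : d ≤ r) :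
    r ^ 2 * yukawaGradSq τ r ≤ radialMajorant τ d r / (8 * π ^ 2) := by
  have hr0 : 0 < r := hd.trans_le hr
  have hexp : exp (-τ * r) ^ 2 = exp (-2 * τ * r) := by rw [← exp_nat_mul]; ring_nf
  have hexp_le : exp (-2 * τ * r) ≤ exp (-2 * τ * d) := exp_le_exp.2 (by nlinarith)
  have hrpow : r ^ (-2 : ℝ) = (r ^ 2)⁻¹ := by rw [rpow_neg hr0.le]; norm_cast
  have hsq : (τ * r + 1) ^ 2 ≤ 2 * (τ * r) ^ 2 + 2 := by nlinarith [sq_nonneg (τ * r - 1)]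
  calc r ^ 2 * yukawaGradSq τ r
      = (τ * r + 1) ^ 2 * exp (-2 * τ * r) / (16 * π ^ 2 * r ^ 2) := by
        rw [yukawaGradSq, ← hexp]; field_simp; ring
    _ ≤ (2 * (τ * r) ^ 2 + 2) * exp (-2 * τ * r) / (16 * π ^ 2 * r ^ 2) := by gcongr
    _ = (τ ^ 2 * exp (-2 * τ * r) + exp (-2 * τ * r) * (r ^ 2)⁻¹) / (8 * π ^ 2) := by
        field_simp; ring
    _ ≤ radialMajorant τ d r / (8 * π ^ 2) := by
        rw [radialMajorant, hrpow]; gcongr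

theorem integrableOn_sq_mul_yukawaGradSq (hτ : 0 < τ) (hd : 0 < d) :
    IntegrableOn (fun r ↦ r ^ 2 * yukawaGradSq τ r) (Ioi d) := by
  refine ((integrableOn_radialMajorant hτ hd).div_const (8 * π ^ 2)).mono' ?_ ?_
  · exact (by unfold yukawaGradSq; fun_prop : Measurable fun r ↦ r ^ 2 * yukawaGradSq τ r)
      |>.aestronglyMeasurable
  · refine (ae_restrict_iff' measurableSet_Ioi).2 (.of_forall fun r hr ↦ ?_)
    rw [norm_of_nonneg (by unfold yukawaGradSq; positivity)]
    exact sq_mul_yukawaGradSq_le hτ.le hd (le_of_lt hr)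

theorem integral_sq_mul_yukawaGradSq_le (hτ : 0 < τ) (hd : 0 < d) :
    ∫ r in Ioi d, r ^ 2 * yukawaGradSq τ r ≤ (τ / 2 + 1 / d) * exp (-2 * τ * d) / (8 * π ^ 2) := by
  rw [← integral_radialMajorant hτ hd, ← integral_div]
  exact setIntegral_mono_on (integrableOn_sq_mul_yukawaGradSq hτ hd)
    ((integrableOn_radialMajorant hτ hd).div_const _) measurableSet_Ioi
    fun r hr ↦ sq_mul_yukawaGradSq_le hτ.le hd (le_of_lt hr)

end Radial

/-- upper bound on the L² norm of the gradient of the Yukawa potential,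
|∇ p_{τ,y}(x)| = (τ r + 1)/(4π r²) e^{-τ r}, r = |x - y|, over an open set 𝒪 with
y ∉ closure 𝒪, with an absolute constant C. -/
theorem stmt1 :
    ∃ C > (0 : ℝ), ∀ (O : Set (EuclideanSpace ℝ (Fin 3))), IsOpen O → O.Nonempty →
      ∀ (y : EuclideanSpace ℝ (Fin 3)), y ∉ closure O →
      ∀ τ : ℝ, 0 < τ →
      ∫ x in O, ((τ * ‖x - y‖ + 1) / (4 * π * ‖x - y‖ ^ 2) * Real.exp (-τ * ‖x - y‖)) ^ 2
        ≤ C * τ * (1 + 1 / (τ * infDist y O)) * Real.exp (-2 * τ * infDist y O) := by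
  set B := (volume : Measure (EuclideanSpace ℝ (Fin 3))).real (ball 0 1)
  have hB : 0 < B :=
    ENNReal.toReal_pos (measure_ball_pos volume 0 one_pos).ne' measure_ball_lt_top.ne
  refine ⟨3 * B / (8 * π ^ 2), by positivity, fun O hO hne y hy τ hτ ↦ ?_⟩
  set d := infDist y O
  have hd : 0 < d := by
    change 0 < infDist y O
    rw [← infDist_closure]
    exact (isClosed_closure.notMem_iff_infDist_pos hne.closure).1 hy
  have hOd : ∀ x ∈ O, d ≤ ‖x - y‖ := fun x hx ↦ by
    simpa only [dist_eq_norm'] using infDist_le_dist_of_mem hx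
  have hτd : τ * (1 + 1 / (τ * d)) = τ + 1 / d := by field_simp
  calc ∫ x in O, yukawaGradSq τ ‖x - y‖
      ≤ 3 * B * ∫ r in Ioi d, r ^ 2 * yukawaGradSq τ r := by
        simpa [finrank_euclideanSpace_fin] using setIntegral_fun_norm_sub_le volume
          hO.measurableSet hd hOd (fun r _ ↦ by unfold yukawaGradSq; positivity)
          (by simpa [finrank_euclideanSpace_fin] using integrableOn_sq_mul_yukawaGradSq hτ hd)
    _ ≤ 3 * B * ((τ / 2 + 1 / d) * exp (-2 * τ * d) / (8 * π ^ 2)) := by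
        gcongr; exact integral_sq_mul_yukawaGradSq_le hτ hd
    _ = 3 * B / (8 * π ^ 2) * (τ / 2 + 1 / d) * exp (-2 * τ * d) := by ring
    _ ≤ 3 * B / (8 * π ^ 2) * (τ + 1 / d) * exp (-2 * τ * d) := by gcongr; linarith
    _ = 3 * B / (8 * π ^ 2) * τ * (1 + 1 / (τ * d)) * exp (-2 * τ * d) := by
        rw [mul_assoc (3 * B / (8 * π ^ 2)) τ, hτd]
end

section
/- Let 𝒪 ⊂ ℝ³ be a nonempty open set, y ∉ closure(𝒪), and d > d(y,𝒪). Then there exists a constant C(𝒪,y,d) > 0 such that for all τ ≥ 0, ∫_𝒪 |∇_x p_{τ,y}(x)|² dx ≥ C(𝒪,y,d) τ² e^{-2τd}. -/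
open MeasureTheory Real Metric

/-!
On `O` the distance to `y` is bounded below by some `ρ > 0`, so `|∇p|² ≤ (16π²|x - y|⁴)⁻¹` is
integrable over `O`. On the nonempty open set `O ∩ B(y, d)` we have `ρ ≤ |x - y| < d`, hence
`|∇p| ≥ τ ρ e^{-τ d} / (4π d²)`; integrating over this set of positive measure gives the bound with
`C = |O ∩ B(y, d)| (ρ / (4π d²))²`.
-/

/-- `|∇ₓ p_{τ,y}(x)|` for the Yukawa kernel `p_{τ,y}`, as a function of `r = |x - y|`. -/
noncomputable def yukawaGradNorm (τ r : ℝ) : ℝ :=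
  (τ * r + 1) / (4 * π * r ^ 2) * exp (-τ * r)

section yukawaGradNorm

variable {τ r : ℝ}

@[fun_prop]
lemma measurable_yukawaGradNorm : Measurable (yukawaGradNorm τ) := by
  unfold yukawaGradNorm
  fun_prop

lemma yukawaGradNorm_nonneg (hτ : 0 ≤ τ) (hr : 0 ≤ r) : 0 ≤ yukawaGradNorm τ r := by
  unfold yukawaGradNorm
  positivity

lemma yukawaGradNorm_le (hr : 0 < r) : yukawaGradNorm τ r ≤ (4 * π * r ^ 2)⁻¹ := by
  have hdecay : (τ * r + 1) * exp (-τ * r) ≤ 1 := by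
    calc (τ * r + 1) * exp (-τ * r) ≤ exp (τ * r) * exp (-τ * r) := by
          gcongr; exact add_one_le_exp _
      _ = 1 := by rw [← exp_add]; simp
  rw [yukawaGradNorm, div_mul_eq_mul_div, div_le_iff₀ (by positivity),
    inv_mul_cancel₀ (by positivity)]
  exact hdecay

lemma yukawaGradNorm_ge {ρ d : ℝ} (hτ : 0 ≤ τ) (hρ : 0 < ρ) (hρr : ρ ≤ r) (hrd : r ≤ d) :
    τ * ρ / (4 * π * d ^ 2) * exp (-τ * d) ≤ yukawaGradNorm τ r := by
  unfold yukawaGradNorm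
  have hr : 0 < r := hρ.trans_le hρr
  gcongr ?_ / ?_ * exp ?_
  · nlinarith
  · gcongr
  · exact mul_le_mul_of_nonpos_left hrd (neg_nonpos.2 hτ)

end yukawaGradNorm

/-- Away from `y`, `‖x - y‖⁻ⁿ` is dominated by a multiple of `(1 + ‖x - y‖)⁻ⁿ`. -/
lemma integrableOn_inv_norm_sub_pow {E : Type*} [NormedAddCommGroup E] [NormedSpace ℝ E]
    [FiniteDimensional ℝ E] [MeasurableSpace E] [BorelSpace E] (μ : Measure E)
    [μ.IsAddHaarMeasure] {s : Set E} (hs : MeasurableSet s) {y : E} {ρ : ℝ} (hρ : 0 < ρ)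
    (hρs : ∀ x ∈ s, ρ ≤ ‖x - y‖) {n : ℕ} (hn : Module.finrank ℝ E < n) :
    IntegrableOn (fun x ↦ (‖x - y‖ ^ n)⁻¹) s μ := by
  have hdom : Integrable (fun x ↦ ((1 + ρ) / ρ) ^ n * (1 + ‖x - y‖) ^ (-(n : ℝ))) μ :=
    ((integrable_one_add_norm (by exact_mod_cast hn)).comp_sub_right y).const_mul _
  refine hdom.integrableOn.mono' (by fun_prop) ((ae_restrict_iff' hs).2 (ae_of_all _ ?_))
  intro x hx
  have hr : 0 < ‖x - y‖ := hρ.trans_le (hρs x hx)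
  have hratio : (1 + ‖x - y‖) / ‖x - y‖ ≤ (1 + ρ) / ρ := by
    rw [div_le_div_iff₀ hr hρ]
    nlinarith [hρs x hx]
  rw [norm_inv, norm_pow, norm_norm, rpow_neg (by positivity), rpow_natCast,
    ← div_eq_mul_inv, le_div_iff₀ (by positivity), ← inv_pow, ← mul_pow, ← div_eq_inv_mul]
  gcongr

lemma integrableOn_yukawaGradNorm_sq {E : Type*} [NormedAddCommGroup E] [NormedSpace ℝ E]
    [FiniteDimensional ℝ E] [MeasurableSpace E] [BorelSpace E] (μ : Measure E)
    [μ.IsAddHaarMeasure] (hE : Module.finrank ℝ E < 4) {s : Set E} (hs : MeasurableSet s)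
    {y : E} {ρ τ : ℝ} (hρ : 0 < ρ) (hρs : ∀ x ∈ s, ρ ≤ ‖x - y‖) (hτ : 0 ≤ τ) :
    IntegrableOn (fun x ↦ yukawaGradNorm τ ‖x - y‖ ^ 2) s μ := by
  refine (((integrableOn_inv_norm_sub_pow μ hs hρ hρs hE).const_mul (16 * π ^ 2)⁻¹)).mono'
    (Measurable.aestronglyMeasurable (by fun_prop))
    ((ae_restrict_iff' hs).2 (ae_of_all _ fun x hx ↦ ?_))
  have hr : 0 < ‖x - y‖ := hρ.trans_le (hρs x hx)
  calc ‖yukawaGradNorm τ ‖x - y‖ ^ 2‖ = yukawaGradNorm τ ‖x - y‖ ^ 2 :=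
        Real.norm_of_nonneg (sq_nonneg _)
    _ ≤ (4 * π * ‖x - y‖ ^ 2)⁻¹ ^ 2 := by
        gcongr
        exacts [yukawaGradNorm_nonneg hτ hr.le, yukawaGradNorm_le hr]
    _ = (16 * π ^ 2)⁻¹ * (‖x - y‖ ^ 4)⁻¹ := by ring

/-- lower bound ∫_𝒪 |∇ p_{τ,y}|² ≥ C τ² e^{-2τd} for y ∉ closure 𝒪
and any d > d(y,𝒪). -/
theorem stmt2
    (O : Set (EuclideanSpace ℝ (Fin 3))) (hO : IsOpen O) (hOne : O.Nonempty)
    (y : EuclideanSpace ℝ (Fin 3)) (hy : y ∉ closure O)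
    (d : ℝ) (hd : infDist y O < d) :
    ∃ C > (0 : ℝ), ∀ τ : ℝ, 0 ≤ τ →
      C * τ ^ 2 * Real.exp (-2 * τ * d)
        ≤ ∫ x in O, ((τ * ‖x - y‖ + 1) / (4 * π * ‖x - y‖ ^ 2)
            * Real.exp (-τ * ‖x - y‖)) ^ 2 := by
  obtain ⟨ρ, hρ, hρO⟩ : ∃ ρ > 0, ∀ x ∈ O, ρ ≤ ‖x - y‖ := by
    simpa [Metric.mem_closure_iff, dist_comm y, dist_eq_norm] using hy
  have hdpos : 0 < d := infDist_nonneg.trans_lt hd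
  set U := O ∩ ball y d
  have hUfin : volume U ≠ ⊤ :=
    ((measure_mono Set.inter_subset_right).trans_lt measure_ball_lt_top).ne
  have hU : 0 < volume.real U := by
    obtain ⟨x, hxO, hxd⟩ := (infDist_lt_iff hOne).1 hd
    exact ENNReal.toReal_pos
      ((hO.inter isOpen_ball).measure_ne_zero volume ⟨x, hxO, mem_ball'.2 hxd⟩) hUfin
  refine ⟨volume.real U * (ρ / (4 * π * d ^ 2)) ^ 2, by positivity, fun τ hτ ↦ ?_⟩
  have hint : IntegrableOn (fun x ↦ yukawaGradNorm τ ‖x - y‖ ^ 2) O :=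
    integrableOn_yukawaGradNorm_sq volume (by simp) hO.measurableSet hρ hρO hτ
  have hlow : ∀ x ∈ U,
      (τ * ρ / (4 * π * d ^ 2) * exp (-τ * d)) ^ 2 ≤ yukawaGradNorm τ ‖x - y‖ ^ 2 :=
    fun x hx ↦ pow_le_pow_left₀ (by positivity)
      (yukawaGradNorm_ge hτ hρ (hρO x hx.1) (mem_ball.1 hx.2).le) 2
  have hexp : exp (-2 * τ * d) = exp (-τ * d) ^ 2 := by
    rw [← exp_nat_mul]; ring_nf
  calc volume.real U * (ρ / (4 * π * d ^ 2)) ^ 2 * τ ^ 2 * exp (-2 * τ * d)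
      = (τ * ρ / (4 * π * d ^ 2) * exp (-τ * d)) ^ 2 * volume.real U := by rw [hexp]; ring
    _ ≤ ∫ x in U, yukawaGradNorm τ ‖x - y‖ ^ 2 :=
      setIntegral_ge_of_const_le_real (hO.inter isOpen_ball).measurableSet hUfin hlow
        (hint.mono_set Set.inter_subset_left)
    _ ≤ ∫ x in O, yukawaGradNorm τ ‖x - y‖ ^ 2 :=
      setIntegral_mono_set hint (ae_of_all _ fun _ ↦ sq_nonneg _)
        Set.inter_subset_left.eventuallyLE
end
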